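/- Let F be a field, k ≥ 1 an integer, and q ∈ F a nonzero element. Suppose that for each pair (λ, μ) of nonzero elements of F and each quadruple α, β, γ, δ ∈ (ℤ_{≥0})^k an element R(λ,μ)^{γ,δ}_{α,β} ∈ F is given such that R(λ,μ)^{γ,δ}_{α,β} = 0 unless γ + δ = α + β (weight conservation, which makes all sums below have finitely many nonzero terms), and such that the elementwise Yang–Baxter equation Σ_{α₁,β₁,γ₁ ∈ (ℤ_{≥0})^k} R(μ,ν)^{β₁,γ₁}_{β,γ} R(λ,ν)^{α₁,γ′}_{α,γ₁} R(λ,μ)^{α′,β′}_{α₁,β₁} = Σ_{α₁,β₁,γ₁ ∈ (ℤ_{≥0})^k} R(λ,μ)^{α₁,β₁}_{α,β} R(λ,ν)^{α′,γ₁}_{α₁,γ} R(μ,ν)^{β′,γ′}_{β₁,γ₁} holds for all nonzero λ, μ, ν ∈ F and all α, β, γ, α′, β′, γ′ ∈ (ℤ_{≥0})^k. Let φ₁ : ℤ^k × ℤ^k → ℤ be ℤ-bilinear and φ₂ : ℤ^k → ℤ be ℤ-linear. Then the modified family R′(λ,μ)^{γ,δ}_{α,β} := q^{φ₁(δ,γ)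 − φ₁(α,β)} · (λμ^{−1})^{φ₂(γ−α)} · R(λ,μ)^{γ,δ}_{α,β} also satisfies the same elementwise Yang–Baxter equation for all nonzero λ, μ, ν ∈ F. (This is the gauge freedom of the Yang–Baxter equation used in the parametric generalization.) -/

import Mathlib

open scoped Classical

noncomputable section

namespace KOY

/-- `F = ℚ(q)`, the field of rational functions in an indeterminate `q` over `ℚ`. -/
abbrev Fq : Type := RatFunc ℚ

/-- The indeterminate `q`. -/
def q : Fq := RatFunc.X

/-- `[u] = (q^u - q^{-u})/(q - q⁻¹)`. -/
def qint (u : ℤ) : Fq := (q ^ u - q ^ (-u)) / (q - q⁻¹)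

/-- `(z; a)_m = ∏_{k=0}^{m-1} (1 - z a^k)`. -/
def poch {R : Type*} [CommRing R] (z a : R) (m : ℕ) : R :=
  ∏ k ∈ Finset.range m, (1 - z * a ^ k)

/-- The `q`-boson Fock space `⊕_{m ≥ 0} F·|m⟩`. -/
abbrev Fock : Type := ℕ →₀ Fq

/-- creation operator `a⁺ |m⟩ = |m+1⟩`. -/
def aP : Module.End Fq Fock := Finsupp.lift Fock Fq ℕ fun m => Finsupp.single (m + 1) 1

/-- annihilation operator `a⁻ |m⟩ = (1-q^m)|m-1⟩`. -/
def aM : Module.End Fq Fock :=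
  Finsupp.lift Fock Fq ℕ fun m => (1 - q ^ m) • Finsupp.single (m - 1) 1

/-- `k |m⟩ = q^m |m⟩`. -/
def kO : Module.End Fq Fock := Finsupp.lift Fock Fq ℕ fun m => q ^ m • Finsupp.single m 1

/-- The operator `G^j_i` for `i, j ≥ 0` (`i` = lower index, `j` = upper index):
`G^j_i = (-q;q)_{i+j} Σ_{m=0}^{t} ((q^{-t};q)_m (-q^{-t};q)_m / ((q;q)_m (-q^{-s};q)_m))
  (a⁺)^{(j-i)_+} (q^m k^m) (a⁻)^{(i-j)_+}` with `s = i+j`, `t = min i j`. -/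
def GopN (i j : ℕ) : Module.End Fq Fock :=
  poch (-q) q (i + j) •
    ∑ m ∈ Finset.range (min i j + 1),
      (poch (q ^ (-(min i j : ℤ))) q m * poch (-q ^ (-(min i j : ℤ))) q m /
          (poch q q m * poch (-q ^ (-((i : ℤ) + j))) q m)) •
        (aP ^ (j - i) * (q ^ m • kO ^ m) * aM ^ (i - j))

/-- `G^j_i` with the convention that it vanishes for negative indices. -/
def Gop (i j : ℤ) : Module.End Fq Fock :=
  if 0 ≤ i ∧ 0 ≤ j then GopN i.toNat j.toNat else 0

/-- `X_{mm}`: the coefficient of `|m⟩` in `X |m⟩`. -/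
def elem (X : Module.End Fq Fock) (m : ℕ) : Fq := X (Finsupp.single m 1) m

/-- `⟨a, b⟩ = ∑_{i<j} a_i b_j` (natural numbers). -/
def innN {n : ℕ} (a b : Fin n → ℕ) : ℕ := ∑ i, ∑ j, if i < j then a i * b j else 0

/-- `⟨a, b⟩ = ∑_{i<j} a_i b_j` (integers). -/
def innZ {n : ℕ} (a b : Fin n → ℤ) : ℤ := ∑ i, ∑ j, if i < j then a i * b j else 0

/-- `|a| = ∑ a_i`. -/
def asum {k : ℕ} (a : Fin k → ℤ) : ℤ := ∑ i, a i

/-- coercion of arrays to integer arrays. -/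
def castZ {n : ℕ} (a : Fin n → ℕ) : Fin n → ℤ := fun i => (a i : ℤ)

/-- The matrix product formula for `K^{(n,l)}(z)^γ_α` as a power series in `t = z⁻¹`:
`q^{⟨γ,α⟩} (q^{-l}t;q)_{l+1} ((q²;q²)_l (-qt;q)_l)⁻¹ Σ_{m≥0} q^{-lm} t^m (G^{γ₁}_{α₁}⋯G^{γₙ}_{αₙ})_{mm}`,
with coefficients transported along a ring hom `f` from `ℚ(q)`. -/
def KmatPS {K : Type*} [Field K] (f : Fq →+* K) (n l : ℕ) (α γ : Fin n → ℕ) :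
    PowerSeries K :=
  (PowerSeries.C (R := K)) (f (q ^ innN γ α)) *
    poch ((PowerSeries.C (R := K)) (f (q ^ (-(l : ℤ)))) * PowerSeries.X) ((PowerSeries.C (R := K)) (f q)) (l + 1) *
    ((PowerSeries.C (R := K)) (f (poch (q ^ 2) (q ^ 2) l)) *
        poch ((PowerSeries.C (R := K)) (f (-q)) * PowerSeries.X) ((PowerSeries.C (R := K)) (f q)) l)⁻¹ *
    PowerSeries.mk fun m =>
      f (q ^ (-(l * m : ℤ)) * elem (List.ofFn fun i => Gop (α i) (γ i)).prod m)

/-- `F((t))`, the field of formal Laurent series in `t`. -/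
abbrev LS : Type := LaurentSeries Fq

/-- `K^{(n,l)}(z)^γ_α ∈ F((t))` (first array = lower index `α`, second = upper index `γ`). -/
def Kmat (n l : ℕ) (α γ : Fin n → ℕ) : LS :=
  HahnSeries.ofPowerSeries ℤ Fq (KmatPS (RingHom.id Fq) n l α γ)

/-- Extension of `Kmat` to integer arrays, vanishing if some entry is negative. -/
def KmatZ (n l : ℕ) (α γ : Fin n → ℤ) : LS :=
  if (∀ i, 0 ≤ α i) ∧ ∀ i, 0 ≤ γ i then
    Kmat n l (fun i => (α i).toNat) fun i => (γ i).toNat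
  else 0

/-- `t ∈ F((t))`. -/
def T : LS := HahnSeries.single (1 : ℤ) (1 : Fq)

/-- the constant embedding `F → F((t))`. -/
def CL : Fq →+* LS := HahnSeries.C

/-- `Φ̄_q(γ|β; λ, μ)` for integer arrays, vanishing unless `0 ≤ γ ≤ β`. -/
def phiBarP {K : Type*} [Field K] (qv lam mu : K) {k : ℕ} (γ β : Fin k → ℤ) : K :=
  if ∀ i, 0 ≤ γ i ∧ γ i ≤ β i then
    poch lam qv (asum γ).toNat * poch (mu / lam) qv (asum β - asum γ).toNat /
        poch mu qv (asum β).toNat *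
      ∏ i, poch qv qv (β i).toNat / (poch qv qv (β i - γ i).toNat * poch qv qv (γ i).toNat)
  else 0

/-- `Φ_q(γ|β; λ, μ) = q^{⟨β-γ,γ⟩} (μ/λ)^{|γ|} Φ̄_q(γ|β; λ, μ)`. -/
def phiP {K : Type*} [Field K] (qv lam mu : K) {k : ℕ} (γ β : Fin k → ℤ) : K :=
  qv ^ innZ (β - γ) γ * (mu / lam) ^ asum γ * phiBarP qv lam mu γ β

/-- truncation `ᾱ = (α₁, …, α_{n-1})` (as an integer array). -/
def bar {n : ℕ} (a : Fin n → ℕ) : Fin (n - 1) → ℤ :=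
  fun i => (a ⟨i.val, by have := i.isLt; omega⟩ : ℤ)

/-- `A^{(l,m)}(z)^{γ,δ}_{α,β}
  = q^{⟨α,β⟩-⟨δ,γ⟩} Σ_{ξ̄+η̄=γ̄+δ̄} Φ_{q²}(ξ̄-δ̄|ξ̄; q^{m-l}z, q^{-l-m}z) Φ_{q²}(η̄|β̄; q^{-l-m}z⁻¹, q^{-2m})`
in any field, for chosen values of `q` and `z`. -/
def Amat {K : Type*} [Field K] (qv zv : K) {n : ℕ} (l m : ℕ) (γ δ α β : Fin n → ℕ) : K :=
  qv ^ ((innN α β : ℤ) - (innN δ γ : ℤ)) *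
    ∑ ξ ∈ Finset.Icc (0 : Fin (n - 1) → ℤ) (bar γ + bar δ),
      phiP (qv ^ 2) (qv ^ ((m : ℤ) - l) * zv) (qv ^ (-(l : ℤ) - m) * zv) (ξ - bar δ) ξ *
        phiP (qv ^ 2) (qv ^ (-(l : ℤ) - m) * zv⁻¹) (qv ^ (-(2 * m : ℤ))) (bar γ + bar δ - ξ)
          (bar β)

/-- `𝒮(λ,μ)^{γ,δ}_{α,β} = θ(γ+δ=α+β) q^{⟨β-γ,γ⟩+⟨α,β-γ⟩+|α||β|-|γ||δ|} λ^{2(|δ|-|α|)}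
  Φ̄_{q²}(α|δ; λ², μ²)`, the parametric `R` matrix element. -/
def Smat {K : Type*} [Field K] (qv lam mu : K) {k : ℕ} (γ δ α β : Fin k → ℕ) : K :=
  if γ + δ = α + β then
    qv ^ (innZ (castZ β - castZ γ) (castZ γ) + innZ (castZ α) (castZ β - castZ γ) +
          (asum (castZ α) * asum (castZ β) - asum (castZ γ) * asum (castZ δ))) *
      lam ^ (2 * (asum (castZ δ) - asum (castZ α))) *
      phiBarP (qv ^ 2) (lam ^ 2) (mu ^ 2) (castZ α) (castZ δ)
  else 0

/-- reversal `ρ(a) = (a_n, …, a_1)`. -/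
def rev {n : ℕ} {M : Type*} (a : Fin n → M) : Fin n → M := fun i => a i.rev

/-- cyclic shift `σ(a) = (a_2, …, a_n, a_1)`. -/
def cyc {n : ℕ} {M : Type*} (a : Fin n → M) : Fin n → M :=
  fun i => a ⟨(i.val + 1) % n, Nat.mod_lt _ (by have := i.isLt; omega)⟩

/-- the cyclic successor on `Fin n`. -/
def nxt {n : ℕ} (i : Fin n) : Fin n :=
  ⟨(i.val + 1) % n, Nat.mod_lt _ (by have := i.isLt; omega)⟩

/-- deletion of the `i`-th entry of an array. -/
def del {n : ℕ} (i : Fin n) (a : Fin n → ℕ) : Fin (n - 1) → ℕ :=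
  fun j =>
    if (j : ℕ) < (i : ℕ) then a ⟨j, by have := j.isLt; omega⟩
    else a ⟨(j : ℕ) + 1, by have := j.isLt; omega⟩

/-- the `q²`-binomial coefficient `binom(b, c)_{q²}` as an element of `ℚ(q)`. -/
def qbinom2 (b c : ℕ) : Fq :=
  poch (q ^ 2) (q ^ 2) b / (poch (q ^ 2) (q ^ 2) (b - c) * poch (q ^ 2) (q ^ 2) c)

/-- `ℚ(q)(z) = ℚ(q, z)`. -/
abbrev Fqz : Type := RatFunc Fq

/-- the image of `q` in `ℚ(q, z)`. -/
def qz : Fqz := RatFunc.C q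

/-- the indeterminate `z` in `ℚ(q, z)`. -/
def zz : Fqz := RatFunc.X

/-!
`R'` is the Reshetikhin twist `F₂₁ R F₁₂⁻¹` of `R` by the diagonal twist `F = q ^ φ₁`, further
conjugated by the diagonal operator `λ ^ φ₂` (spectral parameters attached to the tensor factors).
By weight conservation, each nonzero summand on either side of the Yang–Baxter equation picks up
the same factor `ybeGauge`, which depends only on the external indices: the twist contributes
`F₂₁ F₃₁ F₃₂` on the output and `(F₁₂ F₁₃ F₂₃)⁻¹` on the input, and the conjugation telescopes.
-/

section Gauge

variable {M : Type*} [AddCommGroup M] (φ₁ : M →ₗ[ℤ] M →ₗ[ℤ] ℤ) (φ₂ : M →ₗ[ℤ] ℤ)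

def twistExponent (α β γ α' β' γ' : M) : ℤ :=
  φ₁ β' α' + φ₁ γ' α' + φ₁ γ' β' - (φ₁ α β + φ₁ α γ + φ₁ β γ)

theorem twistExponent_eq_left {α β γ α' β' γ' a b c : M}
    (h₁ : b + c = β + γ) (h₂ : a + γ' = α + c) (h₃ : α' + β' = a + b) :
    (φ₁ c b - φ₁ β γ) + (φ₁ γ' a - φ₁ α c) + (φ₁ β' α' - φ₁ a b) =
      twistExponent φ₁ α β γ α' β' γ' := by
  obtain rfl : α' = a + b - β' := eq_sub_of_add_eq h₃
  obtain rfl : b = β + γ - c := eq_sub_of_add_eq h₁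
  obtain rfl : c = a + γ' - α := eq_sub_of_add_eq' h₂.symm
  simp only [twistExponent, map_add, map_sub, LinearMap.add_apply, LinearMap.sub_apply]
  ring

theorem twistExponent_eq_right {α β γ α' β' γ' a b c : M}
    (h₁ : a + b = α + β) (h₂ : α' + c = a + γ) (h₃ : β' + γ' = b + c) :
    (φ₁ b a - φ₁ α β) + (φ₁ c α' - φ₁ a γ) + (φ₁ γ' β' - φ₁ b c) =
      twistExponent φ₁ α β γ α' β' γ' := by
  obtain rfl : γ' = b + c - β' := eq_sub_of_add_eq' h₃
  obtain rfl : b = α + β - a := eq_sub_of_add_eq' h₁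
  obtain rfl : c = a + γ - α' := eq_sub_of_add_eq' h₂
  simp only [twistExponent, map_add, map_sub, LinearMap.add_apply, LinearMap.sub_apply]
  ring

variable {F : Type*} [Field F]

def gaugeFactor (q lam mu : F) (γ δ α β : M) : F :=
  q ^ (φ₁ δ γ - φ₁ α β) * (lam * mu⁻¹) ^ φ₂ (γ - α)

def ybeGauge (q lam mu nu : F) (α β γ α' β' γ' : M) : F :=
  q ^ twistExponent φ₁ α β γ α' β' γ' * lam ^ φ₂ (α' - α) * mu ^ φ₂ (β' - β) *
    nu ^ φ₂ (γ' - γ)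

variable {q lam mu nu : F}

theorem gaugeFactor_mul_left (hq : q ≠ 0) (hl : lam ≠ 0) (hm : mu ≠ 0) (hn : nu ≠ 0)
    {α β γ α' β' γ' a b c : M} (h₁ : b + c = β + γ) (h₂ : a + γ' = α + c) (h₃ : α' + β' = a + b) :
    gaugeFactor φ₁ φ₂ q mu nu b c β γ * gaugeFactor φ₁ φ₂ q lam nu a γ' α c *
        gaugeFactor φ₁ φ₂ q lam mu α' β' a b =
      ybeGauge φ₁ φ₂ q lam mu nu α β γ α' β' γ' := by
  have hlam : φ₂ (a - α) + φ₂ (α' - a) = φ₂ (α' - α) := by rw [← map_add]; abel_nf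
  have hmu : φ₂ (b - β) - φ₂ (α' - a) = φ₂ (β' - β) := by
    rw [← map_sub, eq_sub_of_add_eq' h₃]; abel_nf
  have hnu : -φ₂ (b - β) - φ₂ (a - α) = φ₂ (γ' - γ) := by
    rw [← map_neg, ← map_sub, eq_sub_of_add_eq h₂, eq_sub_of_add_eq h₁]; abel_nf
  rw [ybeGauge, ← twistExponent_eq_left φ₁ h₁ h₂ h₃, ← hlam, ← hmu, ← hnu]
  simp only [gaugeFactor, zpow_add₀ hq, zpow_sub₀ hq, zpow_add₀ hl, zpow_sub₀ hm, zpow_sub₀ hn,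
    zpow_neg, mul_zpow, inv_zpow]
  ring

theorem gaugeFactor_mul_right (hq : q ≠ 0) (hl : lam ≠ 0) (hm : mu ≠ 0) (hn : nu ≠ 0)
    {α β γ α' β' γ' a b c : M} (h₁ : a + b = α + β) (h₂ : α' + c = a + γ) (h₃ : β' + γ' = b + c) :
    gaugeFactor φ₁ φ₂ q lam mu a b α β * gaugeFactor φ₁ φ₂ q lam nu α' c a γ *
        gaugeFactor φ₁ φ₂ q mu nu β' γ' b c =
      ybeGauge φ₁ φ₂ q lam mu nu α β γ α' β' γ' := by
  have hlam : φ₂ (a - α) + φ₂ (α' - a) = φ₂ (α' - α) := by rw [← map_add]; abel_nf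
  have hmu : φ₂ (β' - b) - φ₂ (a - α) = φ₂ (β' - β) := by
    rw [← map_sub, eq_sub_of_add_eq' h₁]; abel_nf
  have hnu : -φ₂ (α' - a) - φ₂ (β' - b) = φ₂ (γ' - γ) := by
    rw [← map_neg, ← map_sub, eq_sub_of_add_eq h₂, eq_sub_of_add_eq h₃]; abel_nf
  rw [ybeGauge, ← twistExponent_eq_right φ₁ h₁ h₂ h₃, ← hlam, ← hmu, ← hnu]
  simp only [gaugeFactor, zpow_add₀ hq, zpow_sub₀ hq, zpow_add₀ hl, zpow_sub₀ hm, zpow_sub₀ hn,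
    zpow_neg, mul_zpow, inv_zpow]
  ring

end Gauge

theorem mul_mul_eq_of_ne_zero {R : Type*} [CommSemiring R] {g₁ g₂ g₃ x y z G : R}
    (h : x * y * z ≠ 0 → g₁ * g₂ * g₃ = G) :
    g₁ * x * (g₂ * y) * (g₃ * z) = G * (x * y * z) := by
  rw [show g₁ * x * (g₂ * y) * (g₃ * z) = g₁ * g₂ * g₃ * (x * y * z) by ring]
  rcases eq_or_ne (x * y * z) 0 with h0 | h0
  · rw [h0, mul_zero, mul_zero]
  · rw [h h0]

theorem castZ_add {n : ℕ} (a b : Fin n → ℕ) : castZ (a + b) = castZ a + castZ b := by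
  funext i; simp [castZ]

/-- gauge freedom of the Yang–Baxter equation.  If a weight-conserving
family `R(λ,μ)` satisfies the elementwise Yang–Baxter equation, then so does the family
`R'(λ,μ)^{γ,δ}_{α,β} = q^{φ₁(δ,γ)-φ₁(α,β)} (λμ⁻¹)^{φ₂(γ-α)} R(λ,μ)^{γ,δ}_{α,β}`
for any `ℤ`-bilinear `φ₁` and `ℤ`-linear `φ₂`. -/
theorem statement19 {F : Type*} [Field F] (k : ℕ) (q : F) (hq : q ≠ 0)
    (R : F → F → (Fin k → ℕ) → (Fin k → ℕ) → (Fin k → ℕ) → (Fin k → ℕ) → F)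
    (hw : ∀ lam mu, lam ≠ 0 → mu ≠ 0 →
      ∀ γ δ α β : Fin k → ℕ, γ + δ ≠ α + β → R lam mu γ δ α β = 0)
    (hybe : ∀ lam mu nu, lam ≠ 0 → mu ≠ 0 → nu ≠ 0 →
      ∀ α β γ α' β' γ' : Fin k → ℕ,
        (∑ᶠ (a₁ : Fin k → ℕ) (b₁ : Fin k → ℕ) (c₁ : Fin k → ℕ),
            R mu nu b₁ c₁ β γ * R lam nu a₁ γ' α c₁ * R lam mu α' β' a₁ b₁) =
          ∑ᶠ (a₁ : Fin k → ℕ) (b₁ : Fin k → ℕ) (c₁ : Fin k → ℕ),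
            R lam mu a₁ b₁ α β * R lam nu α' c₁ a₁ γ * R mu nu β' γ' b₁ c₁)
    (φ₁ : (Fin k → ℤ) →ₗ[ℤ] (Fin k → ℤ) →ₗ[ℤ] ℤ) (φ₂ : (Fin k → ℤ) →ₗ[ℤ] ℤ) :
    let R' : F → F → (Fin k → ℕ) → (Fin k → ℕ) → (Fin k → ℕ) → (Fin k → ℕ) → F :=
      fun lam mu γ δ α β =>
        q ^ (φ₁ (castZ δ) (castZ γ) - φ₁ (castZ α) (castZ β)) *
          (lam * mu⁻¹) ^ (φ₂ (castZ γ - castZ α)) * R lam mu γ δ α β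
    ∀ lam mu nu, lam ≠ 0 → mu ≠ 0 → nu ≠ 0 →
      ∀ α β γ α' β' γ' : Fin k → ℕ,
        (∑ᶠ (a₁ : Fin k → ℕ) (b₁ : Fin k → ℕ) (c₁ : Fin k → ℕ),
            R' mu nu b₁ c₁ β γ * R' lam nu a₁ γ' α c₁ * R' lam mu α' β' a₁ b₁) =
          ∑ᶠ (a₁ : Fin k → ℕ) (b₁ : Fin k → ℕ) (c₁ : Fin k → ℕ),
            R' lam mu a₁ b₁ α β * R' lam nu α' c₁ a₁ γ * R' mu nu β' γ' b₁ c₁ := by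
  intro R' lam mu nu hl hm hn α β γ α' β' γ'
  have hweight : ∀ {l m : F} {c d a b : Fin k → ℕ}, l ≠ 0 → m ≠ 0 → R l m c d a b ≠ 0 →
      castZ c + castZ d = castZ a + castZ b := fun hl hm h => by
    rw [← castZ_add, ← castZ_add, not_imp_comm.1 (hw _ _ hl hm _ _ _ _) h]
  set G := ybeGauge φ₁ φ₂ q lam mu nu (castZ α) (castZ β) (castZ γ) (castZ α') (castZ β')
    (castZ γ')
  have hL : ∀ a b c, R' mu nu b c β γ * R' lam nu a γ' α c * R' lam mu α' β' a b =
      G * (R mu nu b c β γ * R lam nu a γ' α c * R lam mu α' β' a b) := fun a b c =>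
    mul_mul_eq_of_ne_zero fun h => by
      obtain ⟨⟨h₁, h₂⟩, h₃⟩ := And.imp_left mul_ne_zero_iff.1 (mul_ne_zero_iff.1 h)
      exact gaugeFactor_mul_left φ₁ φ₂ hq hl hm hn (hweight hm hn h₁) (hweight hl hn h₂)
        (hweight hl hm h₃)
  have hR : ∀ a b c, R' lam mu a b α β * R' lam nu α' c a γ * R' mu nu β' γ' b c =
      G * (R lam mu a b α β * R lam nu α' c a γ * R mu nu β' γ' b c) := fun a b c =>
    mul_mul_eq_of_ne_zero fun h => by
      obtain ⟨⟨h₁, h₂⟩, h₃⟩ := And.imp_left mul_ne_zero_iff.1 (mul_ne_zero_iff.1 h)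
      exact gaugeFactor_mul_right φ₁ φ₂ hq hl hm hn (hweight hl hm h₁) (hweight hl hn h₂)
        (hweight hm hn h₃)
  simp only [hL, hR, ← mul_finsum, hybe lam mu nu hl hm hn α β γ α' β' γ']

end KOY
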